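/- (Poisson summation / MacWilliams identity for symplectic orthogonal groups) Let V ≤ F₂^{2n} be a subspace with symplectic orthogonal V^⊥, and let B_w (resp. A_w) be the number of elements of V (resp. V^⊥) whose Pauli weight is w, where the Pauli weight of (u,v) ∈ F₂ⁿ×F₂ⁿ is the number of coordinates i with (uᵢ,vᵢ) ≠ (0,0). Then for all x,y: Σ_w B_w x^{n−w} y^w = (1/|V^⊥|) Σ_{w'} A_{w'} (x+3y)^{n−w'} (x−y)^{w'}. -/

import Mathlib

/-- Pauli vector space: pairs (u,v) of binary n-tuples labeling `X^u Z^v`. -/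
abbrev PV (n : ℕ) := (Fin n → ZMod 2) × (Fin n → ZMod 2)

/-- The symplectic inner product `(u₁,v₁)*(u₂,v₂) = u₁·v₂ + u₂·v₁ (mod 2)`. -/
def sympl {n : ℕ} (a b : PV n) : ZMod 2 :=
  (∑ i, a.1 i * b.2 i) + (∑ i, a.2 i * b.1 i)

lemma sympl_add_left {n : ℕ} (a b c : PV n) :
    sympl (a + b) c = sympl a c + sympl b c := by
  simp only [sympl, Prod.fst_add, Prod.snd_add, Pi.add_apply, add_mul]
  rw [Finset.sum_add_distrib, Finset.sum_add_distrib]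
  ring

lemma sympl_smul_left {n : ℕ} (r : ZMod 2) (a c : PV n) :
    sympl (r • a) c = r * sympl a c := by
  simp only [sympl, Prod.smul_fst, Prod.smul_snd, Pi.smul_apply, smul_eq_mul, mul_assoc]
  rw [← Finset.mul_sum, ← Finset.mul_sum, ← mul_add]

/-- Symplectic orthogonal complement of a subspace of `PV n`. -/
def sOrth {n : ℕ} (V : Submodule (ZMod 2) (PV n)) : Submodule (ZMod 2) (PV n) where
  carrier := {g | ∀ h ∈ V, sympl g h = 0}
  zero_mem' := by
    intro h _
    have : (0 : PV n) = (0 : ZMod 2) • (0 : PV n) := by simp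
    rw [this, sympl_smul_left, zero_mul]
  add_mem' := by
    intro a b ha hb x hx
    rw [sympl_add_left, ha x hx, hb x hx, add_zero]
  smul_mem' := by
    intro r a ha x hx
    rw [sympl_smul_left, ha x hx, mul_zero]

/-- Pauli weight of `(u,v)`: number of positions where `(uᵢ,vᵢ) ≠ (0,0)`. -/
def wt {n : ℕ} (a : PV n) : ℕ :=
  (Finset.univ.filter fun i => a.1 i ≠ 0 ∨ a.2 i ≠ 0).card

/-!
The weight monomial `h ↦ x ^ (n - wt h) * y ^ wt h` is a product over the `n` coordinates, so its
transform `g ↦ ∑ h, (-1) ^ ⟪g, h⟫ x ^ (n - wt h) * y ^ wt h` factors into one-coordinate sums over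
`ZMod 2 × ZMod 2`, each equal to `x + 3y` (if `gᵢ = 0`) or `x - y` (otherwise). Summing this
transform over `V^⊥` and exchanging sums, the character sum `∑_{g ∈ V^⊥} (-1) ^ ⟪g, h⟫` is `|V^⊥|`
on `(V^⊥)^⊥ = V` and vanishes elsewhere (Poisson summation), which gives
`W_{V^⊥}(x + 3y, x - y) = |V^⊥| W_V(x, y)`.
-/

open Finset

lemma zmod_two_eq_zero_or_one (a : ZMod 2) : a = 0 ∨ a = 1 := by decide +revert

noncomputable def signChar : AddChar (ZMod 2) ℝ where
  toFun c := if c = 0 then 1 else -1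
  map_zero_eq_one' := if_pos rfl
  map_add_eq_mul' a b := by
    rcases zmod_two_eq_zero_or_one a with rfl | rfl <;>
      rcases zmod_two_eq_zero_or_one b with rfl | rfl <;>
      simp [(by decide : (1 + 1 : ZMod 2) = 0)]

lemma signChar_eq_one_iff {c : ZMod 2} : signChar c = 1 ↔ c = 0 := by
  rcases zmod_two_eq_zero_or_one c with rfl | rfl <;> norm_num [signChar]

lemma AddChar.map_sum_eq_prod {ι A M : Type*} [AddCommMonoid A] [CommMonoid M]
    (ψ : AddChar A M) (s : Finset ι) (f : ι → A) : ψ (∑ i ∈ s, f i) = ∏ i ∈ s, ψ (f i) := by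
  induction s using Finset.cons_induction with
  | empty => simp
  | cons a s _ ih => rw [sum_cons, prod_cons, ψ.map_add_eq_mul, ih]

lemma sum_signChar_eq_ite {G : Type*} [AddGroup G] [Fintype G] (φ : G →+ ZMod 2)
    [Decidable (∀ a, φ a = 0)] :
    ∑ a, signChar (φ a) = if ∀ a, φ a = 0 then (Fintype.card G : ℝ) else 0 := by
  classical
  have h := AddChar.sum_eq_ite (signChar.compAddMonoidHom φ)
  simp only [AddChar.compAddMonoidHom_apply, AddChar.eq_zero_iff, signChar_eq_one_iff] at h
  convert h

lemma sympl_comm {n : ℕ} (a b : PV n) : sympl a b = sympl b a := by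
  simp only [sympl, mul_comm (a.1 _), mul_comm (a.2 _)]
  exact add_comm _ _

lemma sympl_eq_sum {n : ℕ} (a b : PV n) :
    sympl a b = ∑ i, (a.1 i * b.2 i + a.2 i * b.1 i) :=
  (sum_add_distrib ..).symm

def symplForm (n : ℕ) : LinearMap.BilinForm (ZMod 2) (PV n) :=
  LinearMap.mk₂ (ZMod 2) sympl sympl_add_left sympl_smul_left
    (fun a b c => by rw [sympl_comm, sympl_add_left, sympl_comm b, sympl_comm c])
    (fun r a c => by rw [sympl_comm, sympl_smul_left, sympl_comm c, smul_eq_mul])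

@[simp] lemma symplForm_apply {n : ℕ} (a b : PV n) : symplForm n a b = sympl a b := rfl

lemma symplForm_isSymm (n : ℕ) : (symplForm n).IsSymm :=
  LinearMap.BilinForm.isSymm_def.2 sympl_comm

lemma symplForm_nondegenerate (n : ℕ) : (symplForm n).Nondegenerate := by
  refine ((symplForm_isSymm n).isRefl.nondegenerate_iff_separatingLeft).2 fun a ha => ?_
  ext i
  · simpa [sympl, Pi.single_apply] using ha (0, Pi.single i 1)
  · simpa [sympl, Pi.single_apply] using ha (Pi.single i 1, 0)

lemma sOrth_eq_orthogonal {n : ℕ} (V : Submodule (ZMod 2) (PV n)) :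
    sOrth V = (symplForm n).orthogonal V := by
  ext g
  simp only [LinearMap.BilinForm.mem_orthogonal_iff, symplForm_apply, sympl_comm _ g]
  rfl

lemma orthogonal_sOrth {n : ℕ} (V : Submodule (ZMod 2) (PV n)) :
    (symplForm n).orthogonal (sOrth V) = V := by
  rw [sOrth_eq_orthogonal, LinearMap.BilinForm.orthogonal_orthogonal (symplForm_nondegenerate n)
    (symplForm_isSymm n).isRefl]

theorem sum_sum_signChar_mul_eq_card_mul_sum_orthogonal {M : Type*} [AddCommGroup M]
    [Module (ZMod 2) M] [Fintype M] (B : LinearMap.BilinForm (ZMod 2) M)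
    (W : Submodule (ZMod 2) M) [Fintype W] [Fintype (B.orthogonal W)] (f : M → ℝ) :
    ∑ g : W, ∑ h, signChar (B g h) * f h = Nat.card W * ∑ h : B.orthogonal W, f h := by
  classical
  have char_sum : ∀ h, ∑ g : W, signChar (B g h) =
      if h ∈ B.orthogonal W then (Nat.card W : ℝ) else 0 := fun h => by
    refine (sum_signChar_eq_ite ((B.flip h).domRestrict W).toAddMonoidHom).trans ?_
    rw [Nat.card_eq_fintype_card]
    exact if_congr (by simp [LinearMap.BilinForm.mem_orthogonal_iff]) rfl rfl
  rw [sum_comm]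
  simp_rw [← sum_mul, char_sum, ite_mul, zero_mul, ← sum_filter, mul_sum]
  exact sum_subtype _ (by simp) _

lemma wt_le {n : ℕ} (g : PV n) : wt g ≤ n :=
  (card_filter_le _ _).trans_eq (card_fin n)

lemma prod_ite_eq_pow_wt {R : Type*} [CommMonoid R] {n : ℕ} (g : PV n) (X Y : R) :
    ∏ i, (if g.1 i = 0 ∧ g.2 i = 0 then X else Y) = X ^ (n - wt g) * Y ^ wt g := by
  have h_wt : #{i | ¬(g.1 i = 0 ∧ g.2 i = 0)} = wt g := by
    simp only [wt, not_and_or]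
  have h_compl : #{i | g.1 i = 0 ∧ g.2 i = 0} = n - wt g := by
    rw [← h_wt, eq_tsub_iff_add_eq_of_le (h_wt ▸ wt_le g), card_filter_add_card_filter_not,
      card_univ, Fintype.card_fin]
  rw [prod_ite, prod_const, prod_const, h_wt, h_compl]

lemma sum_signChar_mul_ite_eq_ite (a b : ZMod 2) (X Y : ℝ) :
    ∑ p : ZMod 2 × ZMod 2, signChar (a * p.2 + b * p.1) * (if p.1 = 0 ∧ p.2 = 0 then X else Y) =
      if a = 0 ∧ b = 0 then X + 3 * Y else X - Y := by
  have h_univ : (univ : Finset (ZMod 2)) = {0, 1} := by decide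
  rcases zmod_two_eq_zero_or_one a with rfl | rfl <;>
    rcases zmod_two_eq_zero_or_one b with rfl | rfl <;>
    simp [Fintype.sum_prod_type, h_univ, signChar, (by decide : (1 + 1 : ZMod 2) = 0)] <;> ring

theorem sum_signChar_sympl_mul_pow_wt {n : ℕ} (g : PV n) (X Y : ℝ) :
    ∑ h, signChar (sympl g h) * (X ^ (n - wt h) * Y ^ wt h) =
      (X + 3 * Y) ^ (n - wt g) * (X - Y) ^ wt g := by
  calc ∑ h, signChar (sympl g h) * (X ^ (n - wt h) * Y ^ wt h)
      = ∑ h : PV n, ∏ i, signChar (g.1 i * h.2 i + g.2 i * h.1 i) *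
          (if h.1 i = 0 ∧ h.2 i = 0 then X else Y) := by
        simp_rw [← prod_ite_eq_pow_wt, sympl_eq_sum, AddChar.map_sum_eq_prod, prod_mul_distrib]
    _ = ∏ i, ∑ p : ZMod 2 × ZMod 2, signChar (g.1 i * p.2 + g.2 i * p.1) *
          (if p.1 = 0 ∧ p.2 = 0 then X else Y) := by
        rw [Fintype.prod_sum]
        exact (Fintype.sum_equiv (Equiv.arrowProdEquivProdArrow _ _ _) _ _ fun _ => rfl).symm
    _ = (X + 3 * Y) ^ (n - wt g) * (X - Y) ^ wt g := by
        simp only [sum_signChar_mul_ite_eq_ite, prod_ite_eq_pow_wt]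

lemma sum_range_card_mul_eq_sum {α R : Type*} [Fintype α] [Semiring R] (p : α → Prop)
    [Fintype {a // p a}] (f : α → ℕ) {n : ℕ} (hf : ∀ a, f a ≤ n) (G : ℕ → R) :
    ∑ w ∈ range (n + 1), (Nat.card {a // p a ∧ f a = w} : R) * G w = ∑ a : {a // p a}, G (f a) := by
  classical
  rw [← sum_subtype {a | p a} (by simp) fun a => G (f a),
    ← sum_fiberwise_of_maps_to fun a _ => mem_range_succ_iff.2 (hf a)]
  refine sum_congr rfl fun w _ => ?_
  rw [sum_congr rfl fun a ha => congrArg G (mem_filter.1 ha).2, sum_const, nsmul_eq_mul,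
    filter_filter, Nat.card_eq_fintype_card, Fintype.card_subtype]

/-- MacWilliams identity / Poisson summation for symplectic orthogonal groups:
`W_V(x,y) = |V^⊥|⁻¹ W_{V^⊥}(x+3y, x−y)`. -/
theorem macwilliams_identity {n : ℕ} (V : Submodule (ZMod 2) (PV n))
    (B A : ℕ → ℕ)
    (hB : ∀ w, B w = Nat.card {g : PV n // g ∈ V ∧ wt g = w})
    (hA : ∀ w', A w' = Nat.card {g : PV n // g ∈ sOrth V ∧ wt g = w'}) :
    ∀ x y : ℝ,
      ∑ w ∈ Finset.range (n + 1), (B w : ℝ) * x ^ (n - w) * y ^ w =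
      (1 / (Nat.card (sOrth V) : ℝ)) *
        ∑ w' ∈ Finset.range (n + 1),
          (A w' : ℝ) * (x + 3 * y) ^ (n - w') * (x - y) ^ w' := by
  classical
  intro x y
  have poisson : ∑ g : sOrth V, (x + 3 * y) ^ (n - wt (g : PV n)) * (x - y) ^ wt (g : PV n) =
      Nat.card (sOrth V) * ∑ h : (symplForm n).orthogonal (sOrth V),
        x ^ (n - wt (h : PV n)) * y ^ wt (h : PV n) := by
    simpa only [symplForm_apply, sum_signChar_sympl_mul_pow_wt] using
      sum_sum_signChar_mul_eq_card_mul_sum_orthogonal (symplForm n) (sOrth V)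
        fun h => x ^ (n - wt h) * y ^ wt h
  have double_orth : ∑ h : (symplForm n).orthogonal (sOrth V),
      x ^ (n - wt (h : PV n)) * y ^ wt (h : PV n) =
        ∑ h : V, x ^ (n - wt (h : PV n)) * y ^ wt (h : PV n) :=
    Fintype.sum_equiv (LinearEquiv.ofEq _ _ (orthogonal_sOrth V)).toEquiv _ _ fun _ => rfl
  simp only [hB, hA, mul_assoc, sum_range_card_mul_eq_sum _ _ wt_le]
  rw [poisson, double_orth, one_div, inv_mul_cancel_left₀ (Nat.cast_ne_zero.2 Nat.card_pos.ne')]
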